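/- Let m be an odd natural number and l a natural number with m ≤ l. Then H_l^m(−2) ≡ 1 (mod 2), i.e. the 2-adic norm of H_l^m(−2) − 1 is at most 1/2. -/

import Mathlib

/-- The coefficient `σ_l^m(k)` of the Holt–Ille polynomial `H_l^m`. -/
def sigmaLM (l m k : ℕ) : ℚ :=
  if (l + m) % 2 = 0 then
    (-2 : ℚ) ^ k * (((l - m) / 2).choose k : ℚ) * (((l + m) / 2).choose k : ℚ) /
      (((2 * k).choose k : ℚ))
  else
    (-2 : ℚ) ^ k * (((l - m) / 2).choose k : ℚ) * (((l + m) / 2).choose k : ℚ) /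
      ((((2 * k).choose k : ℚ)) * (2 * (k : ℚ) + 1))

/-- The value `H_l^m(−2) = Σ_{k=0}^{⌊(l−m)/2⌋} σ_l^m(k)`. -/
def HLM (l m : ℕ) : ℚ := ∑ k ∈ Finset.range ((l - m) / 2 + 1), sigmaLM l m k

/-- `a ≡ b (mod 2^N)` for rationals (with odd denominators), expressed via the 2-adic
norm on `ℚ₂`: it means `‖a − b‖₂ ≤ 2^(−N)`. -/
def Cong2 (a b : ℚ) (N : ℕ) : Prop :=
  ‖((a - b : ℚ) : ℚ_[2])‖ ≤ (2 : ℝ) ^ (-(N : ℤ))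

/-! Since `σ_l^m(0) = 1`, the ultrametric inequality reduces the claim to `v₂(σ_l^m(k)) ≥ 1` for
`k ≥ 1`. The odd factor `2k + 1` does not matter, and by Kummer `v₂ C(2k, k)` is the binary digit
sum of `k`, which is `< k` for `k ≥ 2`, so the factor `(−2)^k` wins. For `k = 1` the missing `2`
comes from `C(A,1) C(B,1) = A B` with `A = ⌊(l−m)/2⌋`, `B = ⌊(l+m)/2⌋`: for odd `m` the sum
`A + B` is odd, so `A B` is even. -/

namespace Nat

theorem digits_sum_add_one_le {b n : ℕ} (hb : 2 ≤ b) (hn : b ≤ n) :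
    (b.digits n).sum + 1 ≤ n := by
  rw [Nat.digits_def' (by omega) (by omega), List.sum_cons]
  have hq : 1 ≤ n / b := (Nat.one_le_div_iff (by omega)).mpr hn
  have hdiv : n % b + b * (n / b) = n := Nat.mod_add_div n b
  have : (b.digits (n / b)).sum ≤ n / b := Nat.digit_sum_le b (n / b)
  nlinarith

/-- Kummer's theorem for `k + k`: doubling in base 2 has one carry per binary digit `1` of `k`. -/
theorem padicValNat_two_centralBinom (k : ℕ) :
    padicValNat 2 k.centralBinom = (Nat.digits 2 k).sum := by
  obtain rfl | hk := k.eq_zero_or_pos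
  · simp
  have kummer := sub_one_mul_padicValNat_choose_eq_sub_sum_digits' (p := 2) (k := k) (n := k)
  rw [← two_mul, Nat.digits_base_mul one_lt_two hk, List.sum_cons, zero_add,
    Nat.add_sub_cancel, ← Nat.centralBinom_eq_two_mul_choose] at kummer
  simpa using kummer

theorem padicValNat_two_centralBinom_lt {k : ℕ} (hk : 2 ≤ k) :
    padicValNat 2 k.centralBinom < k := by
  rw [padicValNat_two_centralBinom]
  have := digits_sum_add_one_le le_rfl hk
  omega

end Nat

theorem Padic.norm_ratCast_le_zpow_of_le_padicValRat {p : ℕ} [Fact p.Prime] {q : ℚ} {n : ℤ}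
    (h : n ≤ padicValRat p q) : ‖(q : ℚ_[p])‖ ≤ (p : ℝ) ^ (-n) := by
  rcases eq_or_ne q 0 with rfl | hq
  · simp only [Rat.cast_zero, norm_zero]
    positivity
  rw [Padic.eq_padicNorm, padicNorm.eq_zpow_of_nonzero hq]
  push_cast
  exact zpow_le_zpow_right₀ (mod_cast (Fact.out : p.Prime).one_le) (neg_le_neg h)

theorem sigmaLM_zero (l m : ℕ) : sigmaLM l m 0 = 1 := by
  unfold sigmaLM
  split <;> norm_num

theorem HLM_sub_one (l m : ℕ) :
    HLM l m - 1 = ∑ k ∈ Finset.Ico 1 ((l - m) / 2 + 1), sigmaLM l m k := by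
  rw [HLM, Finset.range_eq_Ico, Finset.sum_eq_sum_Ico_succ_bot (Nat.succ_pos _), sigmaLM_zero,
    add_sub_cancel_left]

theorem exists_odd_sigmaLM_eq (l m k : ℕ) :
    ∃ d : ℕ, Odd d ∧ sigmaLM l m k = (-2 : ℚ) ^ k * (((l - m) / 2).choose k : ℚ) *
      (((l + m) / 2).choose k : ℚ) / ((k.centralBinom : ℚ) * d) := by
  unfold sigmaLM
  split
  · exact ⟨1, odd_one, by rw [Nat.cast_one, mul_one, Nat.centralBinom_eq_two_mul_choose]⟩
  · exact ⟨2 * k + 1, odd_two_mul_add_one k, by push_cast; rfl⟩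

section HoltIlle

variable {l m k : ℕ}

theorem padicValRat_two_sigmaLM (hkA : k ≤ (l - m) / 2) :
    padicValRat 2 (sigmaLM l m k) = k + padicValNat 2 (((l - m) / 2).choose k) +
      padicValNat 2 (((l + m) / 2).choose k) - padicValNat 2 k.centralBinom := by
  obtain ⟨d, hd, hσ⟩ := exists_odd_sigmaLM_eq l m k
  have hkB : k ≤ (l + m) / 2 := hkA.trans (Nat.div_le_div_right (by omega))
  have hA : (((l - m) / 2).choose k : ℚ) ≠ 0 := mod_cast (Nat.choose_pos hkA).ne'
  have hB : (((l + m) / 2).choose k : ℚ) ≠ 0 := mod_cast (Nat.choose_pos hkB).ne'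
  have hC : (k.centralBinom : ℚ) ≠ 0 := mod_cast k.centralBinom_ne_zero
  have hd0 : (d : ℚ) ≠ 0 := mod_cast hd.pos.ne'
  have hpow : (-2 : ℚ) ^ k ≠ 0 := pow_ne_zero _ (by norm_num)
  have hvd : padicValRat 2 (d : ℚ) = 0 := by
    rw [padicValRat.of_nat, Nat.cast_eq_zero]
    exact padicValNat.eq_zero_of_not_dvd hd.not_two_dvd_nat
  have hv2 : padicValRat 2 (-2 : ℚ) = 1 := by
    rw [padicValRat.neg]
    exact_mod_cast padicValRat.self (p := 2) one_lt_two
  rw [hσ, padicValRat.div (by positivity) (mul_ne_zero hC hd0), padicValRat.mul (by positivity) hB,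
    padicValRat.mul hpow hA, padicValRat.mul hC hd0, padicValRat.pow, hv2, hvd,
    padicValRat.of_nat, padicValRat.of_nat, padicValRat.of_nat]
  ring

theorem odd_sub_div_two_add_add_div_two (hm : Odd m) (hml : m ≤ l) :
    Odd ((l - m) / 2 + (l + m) / 2) := by
  obtain ⟨j, rfl⟩ := hm
  rw [Nat.odd_iff]
  omega

theorem one_le_padicValRat_two_sigmaLM (hm : Odd m) (hml : m ≤ l) (hk : 1 ≤ k)
    (hkA : k ≤ (l - m) / 2) : 1 ≤ padicValRat 2 (sigmaLM l m k) := by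
  rw [padicValRat_two_sigmaLM hkA]
  obtain rfl | hk2 := hk.eq_or_lt
  · have hAB := odd_sub_div_two_add_add_div_two hm hml
    have hC : padicValNat 2 (Nat.centralBinom 1) = 1 := by simp [Nat.centralBinom]
    rw [Nat.choose_one_right, Nat.choose_one_right, hC]
    have hpar : 2 ∣ (l - m) / 2 ∨ 2 ∣ (l + m) / 2 := by
      rw [Nat.odd_iff] at hAB
      omega
    rcases hpar with h | h <;> have := one_le_padicValNat_of_dvd (by omega) h <;> omega
  · have := Nat.padicValNat_two_centralBinom_lt hk2
    omega

end HoltIlle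

theorem HLM_cong_one_of_odd (m l : ℕ) (hm : Odd m) (hml : m ≤ l) :
    Cong2 (HLM l m) 1 1 := by
  unfold Cong2
  rw [HLM_sub_one, Rat.cast_sum]
  refine IsUltrametricDist.norm_sum_le_of_forall_le_of_nonneg (by positivity) fun k hk => ?_
  rw [Finset.mem_Ico] at hk
  exact_mod_cast Padic.norm_ratCast_le_zpow_of_le_padicValRat
    (one_le_padicValRat_two_sigmaLM hm hml hk.1 (by omega))
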